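/- Affine context splitting is associative: if Ω ⇝ Ω₁ ⋈ Ω₂ and Ω₁ ⇝ Ω₁' ⋈ Ω₁'', then there exists Ω' such that Ω ⇝ Ω' ⋈ Ω₁'' and Ω' ⇝ Ω₁' ⋈ Ω₂. -/
import Mathlib


/-- Availability annotations -/
inductive Avail : Type
  | avail : Avail
  | unavail : Avail
deriving DecidableEq

/-- Vertex structure (VS) types: single vertex, annotated products,
    type variables, corecursive types. -/
inductive VSTy : Type
  | vert : VSTy
  | prod : VSTy → Avail → VSTy → Avail → VSTy
  | tvar : ℕ → VSTy
  | corec : ℕ → VSTy → VSTy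
deriving DecidableEq

/-- Substitution of a VS type for a type variable (capture-avoiding
    in the sense of not descending under a binder that rebinds `t`). -/
def VSTy.subst (t : ℕ) (σ : VSTy) : VSTy → VSTy
  | .vert => .vert
  | .prod τ₁ a₁ τ₂ a₂ => .prod (VSTy.subst t σ τ₁) a₁ (VSTy.subst t σ τ₂) a₂
  | .tvar s => if s = t then σ else .tvar s
  | .corec s τ => if s = t then .corec s τ else .corec s (VSTy.subst t σ τ)

/-- VS subtyping. -/
inductive SubTy : VSTy → VSTy → Prop
  | refl (τ : VSTy) : SubTy τ τ
  | trans {τ τ'' τ' : VSTy} : SubTy τ τ'' → SubTy τ'' τ' → SubTy τ τ'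
  | prodLeft (τ₁ : VSTy) (a₁ : Avail) (τ₂ : VSTy) (a₂ : Avail) (τ₃ : VSTy) :
      SubTy (.prod τ₁ a₁ τ₂ a₂) (.prod τ₃ .unavail τ₂ a₂)
  | prodRight (τ₁ : VSTy) (a₁ : Avail) (τ₂ : VSTy) (a₂ : Avail) (τ₃ : VSTy) :
      SubTy (.prod τ₁ a₁ τ₂ a₂) (.prod τ₁ a₁ τ₃ .unavail)
  | prodCong {τ₁ τ₁' τ₂ τ₂' : VSTy} (a₁ a₂ : Avail) :
      SubTy τ₁ τ₁' → SubTy τ₂ τ₂' → SubTy (.prod τ₁ a₁ τ₂ a₂) (.prod τ₁' a₁ τ₂' a₂)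
  | corec1 (t : ℕ) (τ : VSTy) : SubTy (.corec t τ) (VSTy.subst t (.corec t τ) τ)
  | corec2 (t : ℕ) (τ : VSTy) : SubTy (VSTy.subst t (.corec t τ) τ) (.corec t τ)

/-- VS type splitting  τ ⇝ τ₁ ⋈ τ₂. -/
inductive VSplit : VSTy → VSTy → VSTy → Prop
  | prod (τ₁ τ₂ : VSTy) :
      VSplit (.prod τ₁ .avail τ₂ .avail)
            (.prod τ₁ .avail τ₂ .unavail)
            (.prod τ₁ .unavail τ₂ .avail)
  | both {τ₁ τ₁' τ₁'' τ₂ τ₂' τ₂'' : VSTy} :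
      VSplit τ₁ τ₁' τ₁'' → VSplit τ₂ τ₂' τ₂'' →
      VSplit (.prod τ₁ .avail τ₂ .avail)
            (.prod τ₁' .avail τ₂' .avail)
            (.prod τ₁'' .avail τ₂'' .avail)
  | left {τ₁ τ₁' τ₁'' : VSTy} (τ₂ : VSTy) (a : Avail) :
      VSplit τ₁ τ₁' τ₁'' →
      VSplit (.prod τ₁ .avail τ₂ a)
            (.prod τ₁' .avail τ₂ a)
            (.prod τ₁'' .avail τ₂ .unavail)
  | right {τ₂ τ₂' τ₂'' : VSTy} (τ₁ : VSTy) (a : Avail) :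
      VSplit τ₂ τ₂' τ₂'' →
      VSplit (.prod τ₁ a τ₂ .avail)
            (.prod τ₁ a τ₂' .avail)
            (.prod τ₁ .unavail τ₂'' .avail)
  | corec {t : ℕ} {τ τ₁ τ₂ : VSTy} :
      VSplit (VSTy.subst t (.corec t τ) τ) τ₁ τ₂ → VSplit (.corec t τ) τ₁ τ₂
  | sub {τ τ₁ τ₁' τ₂ : VSTy} :
      VSplit τ τ₁' τ₂ → SubTy τ₁' τ₁ → VSplit τ τ₁ τ₂
  | comm {τ τ₁ τ₂ : VSTy} : VSplit τ τ₂ τ₁ → VSplit τ τ₁ τ₂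

/-- Names bound in contexts: VS variables or generators. -/
inductive VName : Type
  | var : ℕ → VName
  | gen : ℕ → VName
deriving DecidableEq

/-- A context binds names to VS types. -/
abbrev Ctx := List (VName × VSTy)

/-- Affine context splitting  Ω ⇝ Ω₁ ⋈ Ω₂. -/
inductive CtxSplit : Ctx → Ctx → Ctx → Prop
  | empty : CtxSplit [] [] []
  | comm {Ω Ω₁ Ω₂ : Ctx} : CtxSplit Ω Ω₂ Ω₁ → CtxSplit Ω Ω₁ Ω₂
  | bind {Ω Ω₁ Ω₂ : Ctx} (x : VName) (τ : VSTy) :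
      CtxSplit Ω Ω₁ Ω₂ → CtxSplit ((x, τ) :: Ω) ((x, τ) :: Ω₁) Ω₂
  | typeSplit {Ω Ω₁ Ω₂ : Ctx} {τ τ₁ τ₂ : VSTy} (x : VName) :
      CtxSplit Ω Ω₁ Ω₂ → VSplit τ τ₁ τ₂ →
      CtxSplit ((x, τ) :: Ω) ((x, τ₁) :: Ω₁) ((x, τ₂) :: Ω₂)

/-- Vertex structures. -/
inductive VS : Type
  | var : ℕ → VS
  | gen : ℕ → VS
  | pair : VS → VS → VS
  | fst : VS → VS
  | snd : VS → VS
deriving DecidableEq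

/-- Typing of vertex structures:  Ω; Ψ ⊢ V : τ, with affine context Ω
    and unrestricted context Ψ. -/
inductive HasTy : Ctx → Ctx → VS → VSTy → Prop
  | omegaVar {Ω Ψ : Ctx} {u : ℕ} {τ : VSTy} :
      (VName.var u, τ) ∈ Ω → HasTy Ω Ψ (.var u) τ
  | psiVar {Ω Ψ : Ctx} {u : ℕ} {τ : VSTy} :
      (VName.var u, τ) ∈ Ψ → HasTy Ω Ψ (.var u) τ
  | omegaGen {Ω Ψ : Ctx} {g : ℕ} {τ : VSTy} :
      (VName.gen g, τ) ∈ Ω → HasTy Ω Ψ (.gen g) τ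
  | psiGen {Ω Ψ : Ctx} {g : ℕ} {τ : VSTy} :
      (VName.gen g, τ) ∈ Ψ → HasTy Ω Ψ (.gen g) τ
  | pair {Ω Ω₁ Ω₂ Ψ : Ctx} {V₁ V₂ : VS} {τ₁ τ₂ : VSTy} :
      CtxSplit Ω Ω₁ Ω₂ → HasTy Ω₁ Ψ V₁ τ₁ → HasTy Ω₂ Ψ V₂ τ₂ →
      HasTy Ω Ψ (.pair V₁ V₂) (.prod τ₁ .avail τ₂ .avail)
  | onlyLeftPair {Ω Ψ Ψ' : Ctx} {V₁ V₂ : VS} {τ₁ τ₂ : VSTy} :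
      HasTy Ω Ψ V₁ τ₁ → HasTy [] Ψ' V₂ τ₂ →
      HasTy Ω Ψ (.pair V₁ V₂) (.prod τ₁ .avail τ₂ .unavail)
  | onlyRightPair {Ω Ψ Ψ' : Ctx} {V₁ V₂ : VS} {τ₁ τ₂ : VSTy} :
      HasTy [] Ψ' V₁ τ₁ → HasTy Ω Ψ V₂ τ₂ →
      HasTy Ω Ψ (.pair V₁ V₂) (.prod τ₁ .unavail τ₂ .avail)
  | fst {Ω Ψ : Ctx} {V : VS} {τ₁ τ₂ : VSTy} {a : Avail} :
      HasTy Ω Ψ V (.prod τ₁ .avail τ₂ a) → HasTy Ω Ψ (.fst V) τ₁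
  | snd {Ω Ψ : Ctx} {V : VS} {τ₁ τ₂ : VSTy} {a : Avail} :
      HasTy Ω Ψ V (.prod τ₁ a τ₂ .avail) → HasTy Ω Ψ (.snd V) τ₂
  | sub {Ω Ψ : Ctx} {V : VS} {τ' τ : VSTy} :
      HasTy Ω Ψ V τ' → SubTy τ' τ → HasTy Ω Ψ V τ

/-- Big-step normalization of vertex structures  V ↓ V'. -/
inductive VNorm : VS → VS → Prop
  | var (u : ℕ) : VNorm (.var u) (.var u)
  | gen (g : ℕ) : VNorm (.gen g) (.gen g)
  | pair {V₁ V₁' V₂ V₂' : VS} :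
      VNorm V₁ V₁' → VNorm V₂ V₂' → VNorm (.pair V₁ V₂) (.pair V₁' V₂')
  | fstPair {V V₁ V₂ : VS} : VNorm V (.pair V₁ V₂) → VNorm (.fst V) V₁
  | fstNotPair {V V' : VS} :
      VNorm V V' → (∀ V₁ V₂, V' ≠ .pair V₁ V₂) → VNorm (.fst V) (.fst V')
  | sndPair {V V₁ V₂ : VS} : VNorm V (.pair V₁ V₂) → VNorm (.snd V) V₂
  | sndNotPair {V V' : VS} :
      VNorm V V' → (∀ V₁ V₂, V' ≠ .pair V₁ V₂) → VNorm (.snd V) (.snd V')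

/-- Vertex structure equivalence  Ψ ⊢ V ≡ V' : τ. -/
inductive VSEquiv : Ctx → VS → VS → VSTy → Prop
  | refl {Ψ : Ctx} {V : VS} {τ : VSTy} :
      HasTy [] Ψ V τ → VSEquiv Ψ V V τ
  | comm {Ψ : Ctx} {V V' : VS} {τ : VSTy} :
      VSEquiv Ψ V' V τ → VSEquiv Ψ V V' τ
  | trans {Ψ : Ctx} {V V'' V' : VS} {τ : VSTy} :
      VSEquiv Ψ V V'' τ → VSEquiv Ψ V'' V' τ → VSEquiv Ψ V V' τ
  | pair {Ψ : Ctx} {V₁ V₁' V₂ V₂' : VS} {τ₁ τ₂ : VSTy} :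
      VSEquiv Ψ V₁ V₁' τ₁ → VSEquiv Ψ V₂ V₂' τ₂ →
      VSEquiv Ψ (.pair V₁ V₂) (.pair V₁' V₂') (.prod τ₁ .avail τ₂ .avail)
  | onlyLeftPair {Ψ Ψ' : Ctx} {V₁ V₁' V₂ V₂' : VS} {τ₁ τ₂ : VSTy} :
      VSEquiv Ψ V₁ V₁' τ₁ → VSEquiv Ψ' V₂ V₂' τ₂ →
      VSEquiv Ψ (.pair V₁ V₂) (.pair V₁' V₂') (.prod τ₁ .avail τ₂ .unavail)
  | onlyRightPair {Ψ Ψ' : Ctx} {V₁ V₁' V₂ V₂' : VS} {τ₁ τ₂ : VSTy} :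
      VSEquiv Ψ' V₁ V₁' τ₁ → VSEquiv Ψ V₂ V₂' τ₂ →
      VSEquiv Ψ (.pair V₁ V₂) (.pair V₁' V₂') (.prod τ₁ .unavail τ₂ .avail)
  | fst {Ψ : Ctx} {V V' : VS} {τ₁ τ₂ : VSTy} {a : Avail} :
      VSEquiv Ψ V V' (.prod τ₁ .avail τ₂ a) → VSEquiv Ψ (.fst V) (.fst V') τ₁
  | snd {Ψ : Ctx} {V V' : VS} {τ₁ τ₂ : VSTy} {a : Avail} :
      VSEquiv Ψ V V' (.prod τ₁ a τ₂ .avail) → VSEquiv Ψ (.snd V) (.snd V') τ₂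
  | fstPair {Ψ : Ctx} {V V₁ V₂ : VS} {τ₁ τ₂ : VSTy} {a : Avail} :
      VSEquiv Ψ V (.pair V₁ V₂) (.prod τ₁ .avail τ₂ a) →
      VSEquiv Ψ (.fst V) V₁ τ₁
  | sndPair {Ψ : Ctx} {V V₁ V₂ : VS} {τ₁ τ₂ : VSTy} {a : Avail} :
      VSEquiv Ψ V (.pair V₁ V₂) (.prod τ₁ a τ₂ .avail) →
      VSEquiv Ψ (.snd V) V₂ τ₂
  | sub {Ψ : Ctx} {V V' : VS} {τ' τ : VSTy} :
      VSEquiv Ψ V V' τ' → SubTy τ' τ → VSEquiv Ψ V V' τ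

/-- VNeutral vertex structures: variables, generators, and their projections. -/
inductive VNeutral : VS → Prop
  | var (u : ℕ) : VNeutral (.var u)
  | gen (g : ℕ) : VNeutral (.gen g)
  | fst {V : VS} : VNeutral V → VNeutral (.fst V)
  | snd {V : VS} : VNeutral V → VNeutral (.snd V)

/-- VNormal vertex structures: neutral structures and pairs of normal structures. -/
inductive VNormal : VS → Prop
  | neutral {V : VS} : VNeutral V → VNormal V
  | pair {V₁ V₂ : VS} : VNormal V₁ → VNormal V₂ → VNormal (.pair V₁ V₂)

/-- Vertex paths: a generator followed by a sequence of projections. -/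
inductive IsPath : VS → Prop
  | gen (g : ℕ) : IsPath (.gen g)
  | fst {p : VS} : IsPath p → IsPath (.fst p)
  | snd {p : VS} : IsPath p → IsPath (.snd p)

/-- A context containing only generator bindings. -/
def GenOnly (Ω : Ctx) : Prop := ∀ e ∈ Ω, ∃ g τ, e = (VName.gen g, τ)

/-- Substitution of a vertex structure for a VS variable. -/
def VS.subst (u : ℕ) (W : VS) : VS → VS
  | .var v => if v = u then W else .var v
  | .gen g => .gen g
  | .pair V₁ V₂ => .pair (VS.subst u W V₁) (VS.subst u W V₂)
  | .fst V => .fst (VS.subst u W V)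
  | .snd V => .snd (VS.subst u W V)


section AuxAssoc

/-- Weaken the right component of a split by subtyping. -/
lemma VSplit.subR {τ α β β' : VSTy} (h : VSplit τ α β) (s : SubTy β β') :
    VSplit τ α β' := .comm (.sub h.comm s)

/-- Inversion for splitting a corecursive type. -/
lemma vsplit_corec_inv {σ α β : VSTy} (h : VSplit σ α β) :
    ∀ {t : ℕ} {ρ : VSTy}, σ = .corec t ρ →
      VSplit (VSTy.subst t (.corec t ρ) ρ) α β := by
  induction h with
  | prod τ₁ τ₂ => intro t ρ e; exact VSTy.noConfusion e
  | both _ _ _ _ => intro t ρ e; exact VSTy.noConfusion e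
  | left _ _ _ _ => intro t ρ e; exact VSTy.noConfusion e
  | right _ _ _ _ => intro t ρ e; exact VSTy.noConfusion e
  | corec h _ =>
    intro t ρ e
    injection e with e1 e2
    subst e1; subst e2; exact h
  | sub _ s ih => intro t ρ e; exact .sub (ih e) s
  | comm _ ih => intro t ρ e; exact .comm (ih e)

lemma vsplit_subL {σ α β : VSTy} (h : VSplit σ α β) :
    ∀ {t₁ : VSTy} {a₁ : Avail} {t₂ t₃ : VSTy} {a₂ : Avail},
      σ = .prod t₃ .unavail t₂ a₂ → VSplit (.prod t₁ a₁ t₂ a₂) α β := by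
  induction h with
  | prod τ₁ τ₂ => intro t₁ a₁ t₂ t₃ a₂ e; simp at e
  | both _ _ _ _ => intro t₁ a₁ t₂ t₃ a₂ e; simp at e
  | left _ _ _ _ => intro t₁ a₁ t₂ t₃ a₂ e; simp at e
  | right x c d _ =>
    intro t₁ a₁ t₂ t₃ a₂ e
    injection e with e1 e2 e3 e4
    subst_vars
    exact ((VSplit.right _ _ d).sub
      (SubTy.prodLeft _ _ _ _ _)).subR (SubTy.prodLeft _ _ _ _ _)
  | corec _ _ => intro t₁ a₁ t₂ t₃ a₂ e; exact VSTy.noConfusion e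
  | sub _ s ih => intro t₁ a₁ t₂ t₃ a₂ e; exact .sub (ih e) s
  | comm _ ih => intro t₁ a₁ t₂ t₃ a₂ e; exact .comm (ih e)

lemma vsplit_subRcomp {σ α β : VSTy} (h : VSplit σ α β) :
    ∀ {t₁ : VSTy} {a₁ : Avail} {t₂ t₃ : VSTy} {a₂ : Avail},
      σ = .prod t₁ a₁ t₃ .unavail → VSplit (.prod t₁ a₁ t₂ a₂) α β := by
  induction h with
  | prod τ₁ τ₂ => intro t₁ a₁ t₂ t₃ a₂ e; simp at e
  | both _ _ _ _ => intro t₁ a₁ t₂ t₃ a₂ e; simp at e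
  | right _ _ _ _ => intro t₁ a₁ t₂ t₃ a₂ e; simp at e
  | left y c d _ =>
    intro t₁ a₁ t₂ t₃ a₂ e
    injection e with e1 e2 e3 e4
    subst_vars
    exact ((VSplit.left _ _ d).sub
      (SubTy.prodRight _ _ _ _ _)).subR (SubTy.prodRight _ _ _ _ _)
  | corec _ _ => intro t₁ a₁ t₂ t₃ a₂ e; exact VSTy.noConfusion e
  | sub _ s ih => intro t₁ a₁ t₂ t₃ a₂ e; exact .sub (ih e) s
  | comm _ ih => intro t₁ a₁ t₂ t₃ a₂ e; exact .comm (ih e)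

lemma vsplit_cong {σ α β : VSTy} (h : VSplit σ α β) :
    ∀ {t₁ t₁' t₂ t₂' : VSTy} {a₁ a₂ : Avail},
      σ = .prod t₁' a₁ t₂' a₂ → SubTy t₁ t₁' → SubTy t₂ t₂' →
      (∀ {x y : VSTy}, VSplit t₁' x y → VSplit t₁ x y) →
      (∀ {x y : VSTy}, VSplit t₂' x y → VSplit t₂ x y) →
      VSplit (.prod t₁ a₁ t₂ a₂) α β := by
  induction h with
  | prod u v =>
    intro t₁ t₁' t₂ t₂' a₁ a₂ e s₁ s₂ f₁ f₂
    injection e with e1 e2 e3 e4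
    subst_vars
    exact ((VSplit.prod _ _).sub
      (SubTy.prodCong _ _ s₁ s₂)).subR (SubTy.prodCong _ _ s₁ s₂)
  | both d₁ d₂ _ _ =>
    intro t₁ t₁' t₂ t₂' a₁ a₂ e s₁ s₂ f₁ f₂
    injection e with e1 e2 e3 e4
    subst_vars
    exact .both (f₁ d₁) (f₂ d₂)
  | left y c d _ =>
    intro t₁ t₁' t₂ t₂' a₁ a₂ e s₁ s₂ f₁ f₂
    injection e with e1 e2 e3 e4
    subst_vars
    exact ((VSplit.left _ _ (f₁ d)).sub
      (SubTy.prodCong _ _ (SubTy.refl _) s₂)).subR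
      (SubTy.prodCong _ _ (SubTy.refl _) s₂)
  | right x c d _ =>
    intro t₁ t₁' t₂ t₂' a₁ a₂ e s₁ s₂ f₁ f₂
    injection e with e1 e2 e3 e4
    subst_vars
    exact ((VSplit.right _ _ (f₂ d)).sub
      (SubTy.prodCong _ _ s₁ (SubTy.refl _))).subR
      (SubTy.prodCong _ _ s₁ (SubTy.refl _))
  | corec _ _ => intro t₁ t₁' t₂ t₂' a₁ a₂ e; exact VSTy.noConfusion e
  | sub _ s ih =>
    intro t₁ t₁' t₂ t₂' a₁ a₂ e s₁ s₂ f₁ f₂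
    exact .sub (ih e s₁ s₂ f₁ f₂) s
  | comm _ ih =>
    intro t₁ t₁' t₂ t₂' a₁ a₂ e s₁ s₂ f₁ f₂
    exact .comm (ih e s₁ s₂ f₁ f₂)

/-- Pull a split back along subtyping. -/
lemma subty_pull {τ σ : VSTy} (h : SubTy τ σ) :
    ∀ {α β : VSTy}, VSplit σ α β → VSplit τ α β := by
  induction h with
  | refl _ => exact fun h => h
  | trans _ _ ih₁ ih₂ => exact fun h => ih₁ (ih₂ h)
  | prodLeft τ₁ a₁ τ₂ a₂ τ₃ => exact fun h => vsplit_subL h rfl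
  | prodRight τ₁ a₁ τ₂ a₂ τ₃ => exact fun h => vsplit_subRcomp h rfl
  | prodCong a₁ a₂ s₁ s₂ ih₁ ih₂ =>
    exact fun h => vsplit_cong h rfl s₁ s₂ (fun d => ih₁ d) (fun d => ih₂ d)
  | corec1 t ρ => exact fun h => .corec h
  | corec2 t ρ => exact fun h => vsplit_corec_inv h rfl

/-- The two (symmetric) conclusions of split associativity. -/
def SA2 (τ α β σ : VSTy) : Prop :=
  (∃ τ', VSplit τ τ' β ∧ VSplit τ' α σ) ∧
  (∃ τ', VSplit τ τ' α ∧ VSplit τ' β σ)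

lemma assoc_prod1 {σ α β : VSTy} (h : VSplit σ α β) :
    ∀ {a b : VSTy}, σ = .prod a .avail b .unavail →
      SA2 (.prod a .avail b .avail) α β (.prod a .unavail b .avail) := by
  induction h with
  | prod _ _ => intro a b e; simp at e
  | both _ _ _ _ => intro a b e; simp at e
  | right _ _ _ _ => intro a b e; simp at e
  | corec _ _ => intro a b e; exact VSTy.noConfusion e
  | left y c d _ =>
    intro a b e
    injection e with e1 e2 e3 e4
    subst_vars
    constructor
    · exact ⟨_, .left _ _ d,
        (VSplit.prod _ _).subR (SubTy.prodLeft _ _ _ _ _)⟩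
    · exact ⟨_, .left _ _ d.comm,
        (VSplit.prod _ _).subR (SubTy.prodLeft _ _ _ _ _)⟩
  | sub _ s ih =>
    intro a b e
    obtain ⟨⟨τ', h1, h2⟩, ⟨τ'', h1', h2'⟩⟩ := ih e
    exact ⟨⟨τ', h1, h2.sub s⟩, ⟨τ'', h1'.subR s, h2'⟩⟩
  | comm _ ih =>
    intro a b e
    obtain ⟨p, q⟩ := ih e
    exact ⟨q, p⟩

lemma assoc_prod2 {σ α β : VSTy} (h : VSplit σ α β) :
    ∀ {a b : VSTy}, σ = .prod a .unavail b .avail →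
      SA2 (.prod a .avail b .avail) α β (.prod a .avail b .unavail) := by
  induction h with
  | prod _ _ => intro a b e; simp at e
  | both _ _ _ _ => intro a b e; simp at e
  | left _ _ _ _ => intro a b e; simp at e
  | corec _ _ => intro a b e; exact VSTy.noConfusion e
  | right x c d _ =>
    intro a b e
    injection e with e1 e2 e3 e4
    subst_vars
    constructor
    · exact ⟨_, .right _ _ d,
        (VSplit.prod _ _).comm.subR (SubTy.prodRight _ _ _ _ _)⟩
    · exact ⟨_, .right _ _ d.comm,
        (VSplit.prod _ _).comm.subR (SubTy.prodRight _ _ _ _ _)⟩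
  | sub _ s ih =>
    intro a b e
    obtain ⟨⟨τ', h1, h2⟩, ⟨τ'', h1', h2'⟩⟩ := ih e
    exact ⟨⟨τ', h1, h2.sub s⟩, ⟨τ'', h1'.subR s, h2'⟩⟩
  | comm _ ih =>
    intro a b e
    obtain ⟨p, q⟩ := ih e
    exact ⟨q, p⟩

lemma assoc_both1 {σ α β : VSTy} (h : VSplit σ α β) :
    ∀ {a b a₁ a₂ b₁ b₂ : VSTy}, σ = .prod a₁ .avail b₁ .avail →
      VSplit a a₁ a₂ → VSplit b b₁ b₂ →
      (∀ {x y : VSTy}, VSplit a₁ x y → SA2 a x y a₂) →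
      (∀ {x y : VSTy}, VSplit b₁ x y → SA2 b x y b₂) →
      SA2 (.prod a .avail b .avail) α β (.prod a₂ .avail b₂ .avail) := by
  induction h with
  | corec _ _ => intro a b a₁ a₂ b₁ b₂ e; exact VSTy.noConfusion e
  | prod u v =>
    intro a b a₁ a₂ b₁ b₂ e da db fa fb
    injection e with e1 e2 e3 e4
    subst_vars
    constructor
    · exact ⟨_, (VSplit.right _ _ db.comm).subR (SubTy.prodLeft _ _ _ _ _),
        ((VSplit.left _ _ da.comm).comm).sub (SubTy.prodRight _ _ _ _ _)⟩
    · exact ⟨_, (VSplit.left _ _ da.comm).subR (SubTy.prodRight _ _ _ _ _),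
        ((VSplit.right _ _ db.comm).comm).sub (SubTy.prodLeft _ _ _ _ _)⟩
  | both d₁ d₂ _ _ =>
    intro a b a₁ a₂ b₁ b₂ e da db fa fb
    injection e with e1 e2 e3 e4
    subst_vars
    obtain ⟨⟨a', ha1, ha2⟩, ⟨a'', ha1', ha2'⟩⟩ := fa d₁
    obtain ⟨⟨b', hb1, hb2⟩, ⟨b'', hb1', hb2'⟩⟩ := fb d₂
    exact ⟨⟨_, .both ha1 hb1, .both ha2 hb2⟩,
      ⟨_, .both ha1' hb1', .both ha2' hb2'⟩⟩
  | left y c d _ =>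
    intro a b a₁ a₂ b₁ b₂ e da db fa fb
    injection e with e1 e2 e3 e4
    subst_vars
    obtain ⟨⟨a', ha1, ha2⟩, ⟨a'', ha1', ha2'⟩⟩ := fa d
    constructor
    · exact ⟨_, (VSplit.left _ _ ha1).subR (SubTy.prodRight _ _ _ _ _),
        .both ha2 db⟩
    · exact ⟨_, .both ha1' db.comm,
        ((VSplit.left _ _ ha2'.comm).comm).sub (SubTy.prodRight _ _ _ _ _)⟩
  | right x c d _ =>
    intro a b a₁ a₂ b₁ b₂ e da db fa fb
    injection e with e1 e2 e3 e4
    subst_vars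
    obtain ⟨⟨b', hb1, hb2⟩, ⟨b'', hb1', hb2'⟩⟩ := fb d
    constructor
    · exact ⟨_, (VSplit.right _ _ hb1).subR (SubTy.prodLeft _ _ _ _ _),
        .both da hb2⟩
    · exact ⟨_, .both da.comm hb1',
        ((VSplit.right _ _ hb2'.comm).comm).sub (SubTy.prodLeft _ _ _ _ _)⟩
  | sub _ s ih =>
    intro a b a₁ a₂ b₁ b₂ e da db fa fb
    obtain ⟨⟨τ', h1, h2⟩, ⟨τ'', h1', h2'⟩⟩ := ih e da db fa fb
    exact ⟨⟨τ', h1, h2.sub s⟩, ⟨τ'', h1'.subR s, h2'⟩⟩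
  | comm _ ih =>
    intro a b a₁ a₂ b₁ b₂ e da db fa fb
    obtain ⟨p, q⟩ := ih e da db fa fb
    exact ⟨q, p⟩

lemma assoc_left1 {σ α β : VSTy} (h : VSplit σ α β) :
    ∀ {a b a₁ a₂ : VSTy} {c : Avail}, σ = .prod a₁ .avail b c →
      VSplit a a₁ a₂ →
      (∀ {x y : VSTy}, VSplit a₁ x y → SA2 a x y a₂) →
      SA2 (.prod a .avail b c) α β (.prod a₂ .avail b .unavail) := by
  induction h with
  | corec _ _ => intro a b a₁ a₂ c e; exact VSTy.noConfusion e
  | prod u v =>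
    intro a b a₁ a₂ c e da fa
    injection e with e1 e2 e3 e4
    subst_vars
    constructor
    · exact ⟨_, (VSplit.prod _ _).subR (SubTy.prodLeft _ _ _ _ _),
        .left _ _ da⟩
    · exact ⟨_, .left _ _ da.comm,
        (VSplit.prod _ _).comm.sub (SubTy.prodLeft _ _ _ _ _)⟩
  | both d₁ d₂ _ _ =>
    intro a b a₁ a₂ c e da fa
    injection e with e1 e2 e3 e4
    subst_vars
    obtain ⟨⟨a', ha1, ha2⟩, ⟨a'', ha1', ha2'⟩⟩ := fa d₁
    constructor
    · exact ⟨_, .both ha1 d₂,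
        (VSplit.left _ _ ha2).subR (SubTy.prodRight _ _ _ _ _)⟩
    · exact ⟨_, .both ha1' d₂.comm,
        (VSplit.left _ _ ha2').subR (SubTy.prodRight _ _ _ _ _)⟩
  | left y c' d _ =>
    intro a b a₁ a₂ c e da fa
    injection e with e1 e2 e3 e4
    subst_vars
    obtain ⟨⟨a', ha1, ha2⟩, ⟨a'', ha1', ha2'⟩⟩ := fa d
    constructor
    · exact ⟨_, .left _ _ ha1, .left _ _ ha2⟩
    · exact ⟨_, (VSplit.left _ _ ha1'.comm).comm, .left _ _ ha2'⟩
  | right x c' d _ =>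
    intro a b a₁ a₂ c e da fa
    injection e with e1 e2 e3 e4
    subst_vars
    constructor
    · exact ⟨_, (VSplit.right _ _ d).subR (SubTy.prodLeft _ _ _ _ _),
        (VSplit.left _ _ da).subR (SubTy.prodRight _ _ _ _ _)⟩
    · exact ⟨_, .both da.comm d.comm,
        ((VSplit.prod _ _).comm.sub (SubTy.prodLeft _ _ _ _ _)).subR
          (SubTy.prodRight _ _ _ _ _)⟩
  | sub _ s ih =>
    intro a b a₁ a₂ c e da fa
    obtain ⟨⟨τ', h1, h2⟩, ⟨τ'', h1', h2'⟩⟩ := ih e da fa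
    exact ⟨⟨τ', h1, h2.sub s⟩, ⟨τ'', h1'.subR s, h2'⟩⟩
  | comm _ ih =>
    intro a b a₁ a₂ c e da fa
    obtain ⟨p, q⟩ := ih e da fa
    exact ⟨q, p⟩

lemma assoc_left2 {σ α β : VSTy} (h : VSplit σ α β) :
    ∀ {a b a₁ a₂ : VSTy} {c : Avail}, σ = .prod a₂ .avail b .unavail →
      VSplit a a₁ a₂ →
      (∀ {x y : VSTy}, VSplit a₂ x y → SA2 a x y a₁) →
      SA2 (.prod a .avail b c) α β (.prod a₁ .avail b c) := by
  induction h with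
  | corec _ _ => intro a b a₁ a₂ c e; exact VSTy.noConfusion e
  | prod _ _ => intro a b a₁ a₂ c e; simp at e
  | both _ _ _ _ => intro a b a₁ a₂ c e; simp at e
  | right _ _ _ _ => intro a b a₁ a₂ c e; simp at e
  | left y c' d _ =>
    intro a b a₁ a₂ c e da fa
    injection e with e1 e2 e3 e4
    subst_vars
    obtain ⟨⟨a', ha1, ha2⟩, ⟨a'', ha1', ha2'⟩⟩ := fa d
    constructor
    · exact ⟨_, .left _ _ ha1, (VSplit.left _ _ ha2.comm).comm⟩
    · exact ⟨_, .left _ _ ha1', (VSplit.left _ _ ha2'.comm).comm⟩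
  | sub _ s ih =>
    intro a b a₁ a₂ c e da fa
    obtain ⟨⟨τ', h1, h2⟩, ⟨τ'', h1', h2'⟩⟩ := ih e da fa
    exact ⟨⟨τ', h1, h2.sub s⟩, ⟨τ'', h1'.subR s, h2'⟩⟩
  | comm _ ih =>
    intro a b a₁ a₂ c e da fa
    obtain ⟨p, q⟩ := ih e da fa
    exact ⟨q, p⟩

lemma assoc_right1 {σ α β : VSTy} (h : VSplit σ α β) :
    ∀ {a b b₁ b₂ : VSTy} {c : Avail}, σ = .prod a c b₁ .avail →
      VSplit b b₁ b₂ →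
      (∀ {x y : VSTy}, VSplit b₁ x y → SA2 b x y b₂) →
      SA2 (.prod a c b .avail) α β (.prod a .unavail b₂ .avail) := by
  induction h with
  | corec _ _ => intro a b b₁ b₂ c e; exact VSTy.noConfusion e
  | prod u v =>
    intro a b b₁ b₂ c e db fb
    injection e with e1 e2 e3 e4
    subst_vars
    constructor
    · exact ⟨_, .right _ _ db.comm,
        (VSplit.prod _ _).sub (SubTy.prodRight _ _ _ _ _)⟩
    · exact ⟨_, (VSplit.prod _ _).comm.subR (SubTy.prodRight _ _ _ _ _),
        .right _ _ db⟩
  | both d₁ d₂ _ _ =>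
    intro a b b₁ b₂ c e db fb
    injection e with e1 e2 e3 e4
    subst_vars
    obtain ⟨⟨b', hb1, hb2⟩, ⟨b'', hb1', hb2'⟩⟩ := fb d₂
    constructor
    · exact ⟨_, .both d₁ hb1,
        (VSplit.right _ _ hb2).subR (SubTy.prodLeft _ _ _ _ _)⟩
    · exact ⟨_, .both d₁.comm hb1',
        (VSplit.right _ _ hb2').subR (SubTy.prodLeft _ _ _ _ _)⟩
  | right x c' d _ =>
    intro a b b₁ b₂ c e db fb
    injection e with e1 e2 e3 e4
    subst_vars
    obtain ⟨⟨b', hb1, hb2⟩, ⟨b'', hb1', hb2'⟩⟩ := fb d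
    constructor
    · exact ⟨_, .right _ _ hb1, .right _ _ hb2⟩
    · exact ⟨_, (VSplit.right _ _ hb1'.comm).comm, .right _ _ hb2'⟩
  | left y c' d _ =>
    intro a b b₁ b₂ c e db fb
    injection e with e1 e2 e3 e4
    subst_vars
    constructor
    · exact ⟨_, (VSplit.left _ _ d).subR (SubTy.prodRight _ _ _ _ _),
        (VSplit.right _ _ db).subR (SubTy.prodLeft _ _ _ _ _)⟩
    · exact ⟨_, .both d.comm db.comm,
        ((VSplit.prod _ _).sub (SubTy.prodRight _ _ _ _ _)).subR
          (SubTy.prodLeft _ _ _ _ _)⟩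
  | sub _ s ih =>
    intro a b b₁ b₂ c e db fb
    obtain ⟨⟨τ', h1, h2⟩, ⟨τ'', h1', h2'⟩⟩ := ih e db fb
    exact ⟨⟨τ', h1, h2.sub s⟩, ⟨τ'', h1'.subR s, h2'⟩⟩
  | comm _ ih =>
    intro a b b₁ b₂ c e db fb
    obtain ⟨p, q⟩ := ih e db fb
    exact ⟨q, p⟩

lemma assoc_right2 {σ α β : VSTy} (h : VSplit σ α β) :
    ∀ {a b b₁ b₂ : VSTy} {c : Avail}, σ = .prod a .unavail b₂ .avail →
      VSplit b b₁ b₂ →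
      (∀ {x y : VSTy}, VSplit b₂ x y → SA2 b x y b₁) →
      SA2 (.prod a c b .avail) α β (.prod a c b₁ .avail) := by
  induction h with
  | corec _ _ => intro a b b₁ b₂ c e; exact VSTy.noConfusion e
  | prod _ _ => intro a b b₁ b₂ c e; simp at e
  | both _ _ _ _ => intro a b b₁ b₂ c e; simp at e
  | left _ _ _ _ => intro a b b₁ b₂ c e; simp at e
  | right x c' d _ =>
    intro a b b₁ b₂ c e db fb
    injection e with e1 e2 e3 e4
    subst_vars
    obtain ⟨⟨b', hb1, hb2⟩, ⟨b'', hb1', hb2'⟩⟩ := fb d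
    constructor
    · exact ⟨_, .right _ _ hb1, (VSplit.right _ _ hb2.comm).comm⟩
    · exact ⟨_, .right _ _ hb1', (VSplit.right _ _ hb2'.comm).comm⟩
  | sub _ s ih =>
    intro a b b₁ b₂ c e db fb
    obtain ⟨⟨τ', h1, h2⟩, ⟨τ'', h1', h2'⟩⟩ := ih e db fb
    exact ⟨⟨τ', h1, h2.sub s⟩, ⟨τ'', h1'.subR s, h2'⟩⟩
  | comm _ ih =>
    intro a b b₁ b₂ c e db fb
    obtain ⟨p, q⟩ := ih e db fb
    exact ⟨q, p⟩

/-- Associativity of VS type splitting, in both orders. -/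
lemma vsplit_assoc_aux {τ σ₁ σ₂ : VSTy} (h : VSplit τ σ₁ σ₂) :
    (∀ {α β : VSTy}, VSplit σ₁ α β → SA2 τ α β σ₂) ∧
    (∀ {α β : VSTy}, VSplit σ₂ α β → SA2 τ α β σ₁) := by
  induction h with
  | prod a b =>
    exact ⟨fun h => assoc_prod1 h rfl, fun h => assoc_prod2 h rfl⟩
  | both da db iha ihb =>
    exact ⟨fun h => assoc_both1 h rfl da db (fun d => iha.1 d) (fun d => ihb.1 d),
      fun h => assoc_both1 h rfl da.comm db.comm
        (fun d => iha.2 d) (fun d => ihb.2 d)⟩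
  | left y c da ih =>
    exact ⟨fun h => assoc_left1 h rfl da (fun d => ih.1 d),
      fun h => assoc_left2 h rfl da (fun d => ih.2 d)⟩
  | right x c db ih =>
    exact ⟨fun h => assoc_right1 h rfl db (fun d => ih.1 d),
      fun h => assoc_right2 h rfl db (fun d => ih.2 d)⟩
  | corec _ ih =>
    refine ⟨fun h => ?_, fun h => ?_⟩
    · obtain ⟨⟨τ', h1, h2⟩, ⟨τ'', h1', h2'⟩⟩ := ih.1 h
      exact ⟨⟨τ', .corec h1, h2⟩, ⟨τ'', .corec h1', h2'⟩⟩
    · obtain ⟨⟨τ', h1, h2⟩, ⟨τ'', h1', h2'⟩⟩ := ih.2 h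
      exact ⟨⟨τ', .corec h1, h2⟩, ⟨τ'', .corec h1', h2'⟩⟩
  | sub _ s ih =>
    refine ⟨fun h => ih.1 (subty_pull s h), fun h => ?_⟩
    obtain ⟨⟨τ', h1, h2⟩, ⟨τ'', h1', h2'⟩⟩ := ih.2 h
    exact ⟨⟨τ', h1, h2.subR s⟩, ⟨τ'', h1', h2'.subR s⟩⟩
  | comm _ ih => exact ⟨fun h => ih.2 h, fun h => ih.1 h⟩

/-- Both symmetric conclusions of context-split associativity. -/
def CA2 (Ω Ωa Ωb Ω₂ : Ctx) : Prop :=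
  (∃ Ω', CtxSplit Ω Ω' Ωb ∧ CtxSplit Ω' Ωa Ω₂) ∧
  (∃ Ω', CtxSplit Ω Ω' Ωa ∧ CtxSplit Ω' Ωb Ω₂)

lemma ctxsplit_nil {Ω Ωa Ωb : Ctx} (h : CtxSplit Ω Ωa Ωb) :
    Ω = [] → Ωa = [] ∧ Ωb = [] := by
  induction h with
  | empty => exact fun _ => ⟨rfl, rfl⟩
  | comm _ ih => intro e; obtain ⟨p, q⟩ := ih e; exact ⟨q, p⟩
  | bind _ _ _ _ => intro e; simp at e
  | typeSplit _ _ _ _ => intro e; simp at e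

lemma ctx_assoc_bind {Γ Ωa Ωb : Ctx} (h : CtxSplit Γ Ωa Ωb) :
    ∀ {x : VName} {τ : VSTy} {Ω₁₀ Ω Ω₂ : Ctx}, Γ = (x, τ) :: Ω₁₀ →
      (∀ {p q : Ctx}, CtxSplit Ω₁₀ p q → CA2 Ω p q Ω₂) →
      CA2 ((x, τ) :: Ω) Ωa Ωb Ω₂ := by
  induction h with
  | empty => intro x τ Ω₁₀ Ω Ω₂ e; simp at e
  | comm _ ih =>
    intro x τ Ω₁₀ Ω Ω₂ e f
    obtain ⟨p, q⟩ := ih e f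
    exact ⟨q, p⟩
  | bind y ρ d _ =>
    intro x τ Ω₁₀ Ω Ω₂ e f
    injection e with e1 e2
    injection e1 with e1a e1b
    subst_vars
    obtain ⟨⟨Ω₀', c1, c2⟩, ⟨Ω₀'', c1', c2'⟩⟩ := f d
    exact ⟨⟨(x, τ) :: Ω₀', .bind _ _ c1, .bind _ _ c2⟩,
      ⟨Ω₀'', (CtxSplit.bind _ _ c1'.comm).comm, c2'⟩⟩
  | typeSplit y d v _ =>
    intro x τ Ω₁₀ Ω Ω₂ e f
    injection e with e1 e2
    injection e1 with e1a e1b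
    subst_vars
    obtain ⟨⟨Ω₀', c1, c2⟩, ⟨Ω₀'', c1', c2'⟩⟩ := f d
    exact ⟨⟨_, .typeSplit _ c1 v, .bind _ _ c2⟩,
      ⟨_, .typeSplit _ c1' v.comm, .bind _ _ c2'⟩⟩

lemma ctx_assoc_ts {Γ Ωa Ωb : Ctx} (h : CtxSplit Γ Ωa Ωb) :
    ∀ {x : VName} {τ τ₁ τ₂ : VSTy} {Ω₁₀ Ω Ω₂₀ : Ctx}, Γ = (x, τ₁) :: Ω₁₀ →
      VSplit τ τ₁ τ₂ →
      (∀ {p q : Ctx}, CtxSplit Ω₁₀ p q → CA2 Ω p q Ω₂₀) →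
      CA2 ((x, τ) :: Ω) Ωa Ωb ((x, τ₂) :: Ω₂₀) := by
  induction h with
  | empty => intro x τ τ₁ τ₂ Ω₁₀ Ω Ω₂₀ e; simp at e
  | comm _ ih =>
    intro x τ τ₁ τ₂ Ω₁₀ Ω Ω₂₀ e v f
    obtain ⟨p, q⟩ := ih e v f
    exact ⟨q, p⟩
  | bind y ρ d _ =>
    intro x τ τ₁ τ₂ Ω₁₀ Ω Ω₂₀ e v f
    injection e with e1 e2
    injection e1 with e1a e1b
    subst_vars
    obtain ⟨⟨Ω₀', c1, c2⟩, ⟨Ω₀'', c1', c2'⟩⟩ := f d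
    exact ⟨⟨(x, τ) :: Ω₀', .bind _ _ c1, .typeSplit _ c2 v⟩,
      ⟨(x, τ₂) :: Ω₀'', .typeSplit _ c1' v.comm,
        (CtxSplit.bind _ _ c2'.comm).comm⟩⟩
  | typeSplit y d w _ =>
    intro x τ τ₁ τ₂ Ω₁₀ Ω Ω₂₀ e v f
    injection e with e1 e2
    injection e1 with e1a e1b
    subst_vars
    obtain ⟨⟨τ', s1, s2⟩, ⟨τ'', s1', s2'⟩⟩ := (vsplit_assoc_aux v).1 w
    obtain ⟨⟨Ω₀', c1, c2⟩, ⟨Ω₀'', c1', c2'⟩⟩ := f d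
    exact ⟨⟨(x, τ') :: Ω₀', .typeSplit _ c1 s1, .typeSplit _ c2 s2⟩,
      ⟨(x, τ'') :: Ω₀'', .typeSplit _ c1' s1', .typeSplit _ c2' s2'⟩⟩

lemma ctx_assoc_aux {Ω Ω₁ Ω₂ : Ctx} (h : CtxSplit Ω Ω₁ Ω₂) :
    (∀ {p q : Ctx}, CtxSplit Ω₁ p q → CA2 Ω p q Ω₂) ∧
    (∀ {p q : Ctx}, CtxSplit Ω₂ p q → CA2 Ω p q Ω₁) := by
  induction h with
  | empty =>
    refine ⟨fun h => ?_, fun h => ?_⟩ <;>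
    · obtain ⟨e1, e2⟩ := ctxsplit_nil h rfl
      subst e1; subst e2
      exact ⟨⟨[], .empty, .empty⟩, ⟨[], .empty, .empty⟩⟩
  | comm _ ih => exact ⟨fun h => ih.2 h, fun h => ih.1 h⟩
  | bind x τ d ih =>
    refine ⟨fun h => ctx_assoc_bind h rfl (fun d' => ih.1 d'), fun h => ?_⟩
    obtain ⟨⟨Ω₀', c1, c2⟩, ⟨Ω₀'', c1', c2'⟩⟩ := ih.2 h
    exact ⟨⟨(x, τ) :: Ω₀', .bind _ _ c1, (CtxSplit.bind _ _ c2.comm).comm⟩,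
      ⟨(x, τ) :: Ω₀'', .bind _ _ c1', (CtxSplit.bind _ _ c2'.comm).comm⟩⟩
  | typeSplit x d v ih =>
    exact ⟨fun h => ctx_assoc_ts h rfl v (fun d' => ih.1 d'),
      fun h => ctx_assoc_ts h rfl v.comm (fun d' => ih.2 d')⟩

end AuxAssoc

/-- associativity of affine context splitting. -/
theorem ctxSplit_assoc {Ω Ω₁ Ω₂ Ω₁' Ω₁'' : Ctx}
    (h₁ : CtxSplit Ω Ω₁ Ω₂) (h₂ : CtxSplit Ω₁ Ω₁' Ω₁'') :
    ∃ Ω', CtxSplit Ω Ω' Ω₁'' ∧ CtxSplit Ω' Ω₁' Ω₂ :=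
  ((ctx_assoc_aux h₁).1 h₂).1
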